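/- arXiv:1504.04151 — 3 statements merged into one kernel-verified Lean document; each statement's English description precedes it below -/
import Mathlib

section
/- The associated Ricci tensor ρ* satisfies ρ*(e₀,e₀) = 2(ω₁ − (1/2)θ₁)ω₂ and ρ*(e₁,e₂) = (1/4)(θ₁² − θ₂²). -/
noncomputable section

/-- `V = ℝ³`. -/
abbrev V : Type := Fin 3 → ℝ

/-- The standard basis `e₀, e₁, e₂` of `V = ℝ³`. -/
def e : Fin 3 → V := fun i => Pi.single i 1

/-- The B-metric `g`: the symmetric bilinear form with
`g(e₀,e₀) = g(e₁,e₁) = 1`, `g(e₂,e₂) = -1`, `g(eᵢ,eⱼ) = 0` for `i ≠ j`. -/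
def gB (x y : V) : ℝ := x 0 * y 0 + x 1 * y 1 - x 2 * y 2

/-- The linear map `φ` with `φe₀ = 0`, `φe₁ = e₂`, `φe₂ = -e₁`. -/
def phi : V → V := fun x => ![0, -(x 2), x 1]

/-- The 1-form `η` with `η(e₀) = 1`, `η(e₁) = η(e₂) = 0`. -/
def eta (x : V) : ℝ := x 0

/-- The signs `ε₀ = ε₁ = 1`, `ε₂ = -1`. -/
def eps : Fin 3 → ℝ := ![1, 1, -1]

/-- The curvature tensor `R(x,y)z = ∇ₓ(∇ᵧz) − ∇ᵧ(∇ₓz) − ∇_{[x,y]}z`. -/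
def Rc (br nabla : V →ₗ[ℝ] V →ₗ[ℝ] V) (x y z : V) : V :=
  nabla x (nabla y z) - nabla y (nabla x z) - nabla (br x y) z

/-- The curvature tensor of type (0,4): `R(x,y,z,w) = g(R(x,y)z, w)`. -/
def R4 (br nabla : V →ₗ[ℝ] V →ₗ[ℝ] V) (x y z w : V) : ℝ :=
  gB (Rc br nabla x y z) w

/-- The Ricci tensor `ρ(y,z) = R(e₀,y,z,e₀) + R(e₁,y,z,e₁) − R(e₂,y,z,e₂)`. -/
def ric (br nabla : V →ₗ[ℝ] V →ₗ[ℝ] V) (y z : V) : ℝ :=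
  R4 br nabla (e 0) y z (e 0) + R4 br nabla (e 1) y z (e 1) - R4 br nabla (e 2) y z (e 2)

/-- The scalar curvature `τ = ρ(e₀,e₀) + ρ(e₁,e₁) − ρ(e₂,e₂)`. -/
def scal (br nabla : V →ₗ[ℝ] V →ₗ[ℝ] V) : ℝ :=
  ric br nabla (e 0) (e 0) + ric br nabla (e 1) (e 1) - ric br nabla (e 2) (e 2)

/-- The associated Ricci tensor
`ρ*(y,z) = R(e₀,y,z,φe₀) + R(e₁,y,z,φe₁) − R(e₂,y,z,φe₂)`. -/
def ricStar (br nabla : V →ₗ[ℝ] V →ₗ[ℝ] V) (y z : V) : ℝ :=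
  R4 br nabla (e 0) y z (phi (e 0)) + R4 br nabla (e 1) y z (phi (e 1))
    - R4 br nabla (e 2) y z (phi (e 2))

/-- The associated scalar curvature `τ* = ρ*(e₀,e₀) + ρ*(e₁,e₁) − ρ*(e₂,e₂)`. -/
def scalStar (br nabla : V →ₗ[ℝ] V →ₗ[ℝ] V) : ℝ :=
  ricStar br nabla (e 0) (e 0) + ricStar br nabla (e 1) (e 1) - ricStar br nabla (e 2) (e 2)

/-- The covariant derivative of `φ`: `(∇φ)(x,y) = ∇ₓ(φy) − φ(∇ₓy)`. -/
def nablaPhi (nabla : V →ₗ[ℝ] V →ₗ[ℝ] V) (x y : V) : V :=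
  nabla x (phi y) - phi (nabla x y)

/-- The square norm `‖∇φ‖² = Σ_{i,k} εᵢεₖ g((∇φ)(eᵢ,eₖ), (∇φ)(eᵢ,eₖ))`. -/
def normNablaPhiSq (nabla : V →ₗ[ℝ] V →ₗ[ℝ] V) : ℝ :=
  ∑ i : Fin 3, ∑ k : Fin 3,
    eps i * eps k * gB (nablaPhi nabla (e i) (e k)) (nablaPhi nabla (e i) (e k))


lemma vecext (v w : V) (h0 : v 0 = w 0) (h1 : v 1 = w 1) (h2 : v 2 = w 2) : v = w := by
  funext k; fin_cases k <;> assumption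

lemma e0_def : e 0 = ![1,0,0] := by
  funext k; fin_cases k <;> simp [e, Pi.single_apply]
lemma e1_def : e 1 = ![0,1,0] := by
  funext k; fin_cases k <;> simp [e, Pi.single_apply]
lemma e2_def : e 2 = ![0,0,1] := by
  funext k; fin_cases k <;> simp [e, Pi.single_apply]

lemma phi_e0 : phi (e 0) = (0 : V) := by
  funext k; fin_cases k <;> simp [phi, e0_def]
lemma phi_e1 : phi (e 1) = e 2 := by
  funext k; fin_cases k <;> simp [phi, e1_def, e2_def]
lemma phi_e2 : phi (e 2) = -(e 1) := by
  funext k; fin_cases k <;> simp [phi, e1_def, e2_def]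

/-- components of the associated Ricci tensor `ρ*`. -/
theorem statement7
    (θ₁ θ₂ ω₁ ω₂ : ℝ) (hcomm : θ₁ * ω₂ = θ₂ * ω₁)
    (br : V →ₗ[ℝ] V →ₗ[ℝ] V)
    (hskew : ∀ x y : V, br x y = - br y x)
    (h01 : br (e 0) (e 1) = (-ω₂) • e 0)
    (h02 : br (e 0) (e 2) = ω₁ • e 0)
    (h12 : br (e 1) (e 2) = ((1/2) * θ₁) • e 1 + ((1/2) * θ₂) • e 2)
    (nabla : V →ₗ[ℝ] V →ₗ[ℝ] V)
    (hKoszul : ∀ x y z : V, 2 * gB (nabla x y) z =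
      gB (br x y) z + gB (br z x) y + gB (br z y) x) :
    ricStar br nabla (e 0) (e 0) = 2 * (ω₁ - (1/2) * θ₁) * ω₂ ∧
    ricStar br nabla (e 1) (e 2) = (1/4) * (θ₁ ^ 2 - θ₂ ^ 2) := by
    -- brackets
  have hzero : ∀ x : V, br x x = 0 := by
    intro x
    have h := hskew x x
    have h2 : (2:ℝ) • br x x = 0 := by
      rw [two_smul]; nth_rewrite 1 [h]; simp
    simpa using h2
  have h10 : br (e 1) (e 0) = ω₂ • e 0 := by
    rw [hskew, h01]; module
  have h20 : br (e 2) (e 0) = (-ω₁) • e 0 := by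
    rw [hskew, h02]; module
  have h21 : br (e 2) (e 1) = (-((1/2) * θ₁)) • e 1 + (-((1/2) * θ₂)) • e 2 := by
    rw [hskew, h12]; module
  -- nabla values
  have key : ∀ i j : Fin 3, ∀ w : V,
      (2 * (gB (br (e i) (e j)) (e 0) + gB (br (e 0) (e i)) (e j)
        + gB (br (e 0) (e j)) (e i)) = 4 * gB w (e 0)) →
      (2 * (gB (br (e i) (e j)) (e 1) + gB (br (e 1) (e i)) (e j)
        + gB (br (e 1) (e j)) (e i)) = 4 * gB w (e 1)) →
      (2 * (gB (br (e i) (e j)) (e 2) + gB (br (e 2) (e i)) (e j)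
        + gB (br (e 2) (e j)) (e i)) = 4 * gB w (e 2)) →
      nabla (e i) (e j) = w := by
    intro i j w hw0 hw1 hw2
    apply vecext
    · have h := hKoszul (e i) (e j) (e 0)
      simp only [gB, e0_def, e1_def, e2_def] at h hw0 ⊢
      simp at h hw0 ⊢
      linarith
    · have h := hKoszul (e i) (e j) (e 1)
      simp only [gB, e0_def, e1_def, e2_def] at h hw1 ⊢
      simp at h hw1 ⊢
      linarith
    · have h := hKoszul (e i) (e j) (e 2)
      simp only [gB, e0_def, e1_def, e2_def] at h hw2 ⊢
      simp at h hw2 ⊢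
      linarith
  have n00 : nabla (e 0) (e 0) = ω₂ • e 1 + ω₁ • e 2 := by
    apply key <;>
      (simp only [hzero, h01, h02, h12, h10, h20, h21];
       simp [gB, e0_def, e1_def, e2_def]; try ring)
  have n01 : nabla (e 0) (e 1) = (-ω₂) • e 0 := by
    apply key <;>
      (simp only [hzero, h01, h02, h12, h10, h20, h21];
       simp [gB, e0_def, e1_def, e2_def]; try ring)
  have n02 : nabla (e 0) (e 2) = ω₁ • e 0 := by
    apply key <;>
      (simp only [hzero, h01, h02, h12, h10, h20, h21];
       simp [gB, e0_def, e1_def, e2_def]; try ring)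
  have n10 : nabla (e 1) (e 0) = 0 := by
    apply key <;>
      (simp only [hzero, h01, h02, h12, h10, h20, h21];
       simp [gB, e0_def, e1_def, e2_def]; try ring)
  have n20 : nabla (e 2) (e 0) = 0 := by
    apply key <;>
      (simp only [hzero, h01, h02, h12, h10, h20, h21];
       simp [gB, e0_def, e1_def, e2_def]; try ring)
  have n11 : nabla (e 1) (e 1) = ((1/2) * θ₁) • e 2 := by
    apply key <;>
      (simp only [hzero, h01, h02, h12, h10, h20, h21];
       simp [gB, e0_def, e1_def, e2_def]; try ring)
  have n12 : nabla (e 1) (e 2) = ((1/2) * θ₁) • e 1 := by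
    apply key <;>
      (simp only [hzero, h01, h02, h12, h10, h20, h21];
       simp [gB, e0_def, e1_def, e2_def]; try ring)
  have n21 : nabla (e 2) (e 1) = (-((1/2) * θ₂)) • e 2 := by
    apply key <;>
      (simp only [hzero, h01, h02, h12, h10, h20, h21];
       simp [gB, e0_def, e1_def, e2_def]; try ring)
  have n22 : nabla (e 2) (e 2) = (-((1/2) * θ₂)) • e 1 := by
    apply key <;>
      (simp only [hzero, h01, h02, h12, h10, h20, h21];
       simp [gB, e0_def, e1_def, e2_def]; try ring)
  constructor
  · simp only [ricStar, R4, Rc, phi_e0, phi_e1, phi_e2, hzero, h01, h02, h12, h10, h20, h21,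
      n00, n01, n02, n10, n11, n12, n20, n21, n22,
      map_add, map_smul, map_neg, map_zero,
      LinearMap.add_apply, LinearMap.smul_apply, LinearMap.neg_apply, LinearMap.zero_apply,
      smul_add, smul_smul, smul_zero, neg_smul]
    simp only [gB, e0_def, e1_def, e2_def, Pi.add_apply, Pi.sub_apply, Pi.smul_apply,
      Pi.neg_apply, Pi.zero_apply, smul_eq_mul]
    simp
    nlinarith [hcomm]
  · simp only [ricStar, R4, Rc, phi_e0, phi_e1, phi_e2, hzero, h01, h02, h12, h10, h20, h21,
      n00, n01, n02, n10, n11, n12, n20, n21, n22,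
      map_add, map_smul, map_neg, map_zero,
      LinearMap.add_apply, LinearMap.smul_apply, LinearMap.neg_apply, LinearMap.zero_apply,
      smul_add, smul_smul, smul_zero, neg_smul]
    simp only [gB, e0_def, e1_def, e2_def, Pi.add_apply, Pi.sub_apply, Pi.smul_apply,
      Pi.neg_apply, Pi.zero_apply, smul_eq_mul]
    simp
    ring
end
end

section
/- The Ricci tensor vanishes identically (ρ(y,z) = 0 for all y, z ∈ V) if and only if the curvature vanishes identically (R(x,y)z = 0 for all x, y, z ∈ V). -/
set_option maxHeartbeats 1000000


noncomputable section

lemma Vexp (x : V) : x = x 0 • e 0 + x 1 • e 1 + x 2 • e 2 := by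
  funext k; fin_cases k <;> simp [e, Pi.single_apply]

lemma bexp (T : V →ₗ[ℝ] V →ₗ[ℝ] V) (x y : V) : T x y =
    x 0 • (y 0 • T (e 0) (e 0) + y 1 • T (e 0) (e 1) + y 2 • T (e 0) (e 2)) +
    x 1 • (y 0 • T (e 1) (e 0) + y 1 • T (e 1) (e 1) + y 2 • T (e 1) (e 2)) +
    x 2 • (y 0 • T (e 2) (e 0) + y 1 • T (e 2) (e 1) + y 2 • T (e 2) (e 2)) := by
  conv_lhs => rw [Vexp x, Vexp y]
  simp [map_add, map_smul]
  module

section Aux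
variable (θ₁ θ₂ ω₁ ω₂ : ℝ)
    (br : V →ₗ[ℝ] V →ₗ[ℝ] V)
    (hskew : ∀ x y : V, br x y = - br y x)
    (h01 : br (e 0) (e 1) = (-ω₂) • e 0)
    (h02 : br (e 0) (e 2) = ω₁ • e 0)
    (h12 : br (e 1) (e 2) = ((1/2) * θ₁) • e 1 + ((1/2) * θ₂) • e 2)
    (nabla : V →ₗ[ℝ] V →ₗ[ℝ] V)
    (hKoszul : ∀ x y z : V, 2 * gB (nabla x y) z =
      gB (br x y) z + gB (br z x) y + gB (br z y) x)

include hskew h01 h02 h12 in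
lemma brF : ∀ x y : V, br x y =
    ![ -ω₂*(x 0*y 1 - x 1*y 0) + ω₁*(x 0*y 2 - x 2*y 0),
       (θ₁/2)*(x 1*y 2 - x 2*y 1), (θ₂/2)*(x 1*y 2 - x 2*y 1) ] := by
  have hbxx : ∀ x : V, br x x = 0 := by
    intro x; funext k
    have h := congrFun (hskew x x) k
    simp only [Pi.neg_apply] at h
    simp only [Pi.zero_apply]; linarith
  intro x y
  rw [bexp br x y, hbxx, hbxx, hbxx, h01, h02, h12,
    hskew (e 1) (e 0), hskew (e 2) (e 0), hskew (e 2) (e 1), h01, h02, h12]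
  funext k; fin_cases k <;> (simp only [e, Pi.single_apply, Pi.add_apply, Pi.neg_apply, Pi.zero_apply,
      Pi.smul_apply, smul_eq_mul, Matrix.cons_val_zero, Matrix.cons_val_one, Matrix.head_cons,
      Matrix.cons_val_two, Matrix.tail_cons, Fin.zero_eta, Fin.mk_one, Fin.reduceFinMk,
      Fin.reduceEq, reduceIte, Fin.isValue]; ring)

variable (hbF : ∀ x y : V, br x y =
    ![ -ω₂*(x 0*y 1 - x 1*y 0) + ω₁*(x 0*y 2 - x 2*y 0),
       (θ₁/2)*(x 1*y 2 - x 2*y 1), (θ₂/2)*(x 1*y 2 - x 2*y 1) ])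

include hKoszul hbF in
lemma nabF : ∀ x y : V, nabla x y =
    ![ x 0*(-ω₂*(y 1) + ω₁*(y 2)),
       x 0*(y 0)*ω₂ + (θ₁/2)*(x 1*(y 2)) - (θ₂/2)*(x 2*(y 2)),
       x 0*(y 0)*ω₁ + (θ₁/2)*(x 1*(y 1)) - (θ₂/2)*(x 2*(y 1)) ] := by
  have key : ∀ i j : Fin 3, nabla (e i) (e j) =
      ![ (e i) 0*(-ω₂*((e j) 1) + ω₁*((e j) 2)),
         (e i) 0*((e j) 0)*ω₂ + (θ₁/2)*((e i) 1*((e j) 2)) - (θ₂/2)*((e i) 2*((e j) 2)),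
         (e i) 0*((e j) 0)*ω₁ + (θ₁/2)*((e i) 1*((e j) 1)) - (θ₂/2)*((e i) 2*((e j) 1)) ] := by
    intro i j
    have h0 := hKoszul (e i) (e j) (e 0)
    have h1 := hKoszul (e i) (e j) (e 1)
    have h2 := hKoszul (e i) (e j) (e 2)
    funext k
    fin_cases i <;> fin_cases j <;> fin_cases k <;>
      simp [gB, hbF, e, Pi.single_apply] at h0 h1 h2 ⊢ <;> linarith
  intro x y
  rw [bexp nabla x y, key 0 0, key 0 1, key 0 2, key 1 0, key 1 1, key 1 2,
    key 2 0, key 2 1, key 2 2]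
  funext k; fin_cases k <;> (simp only [e, Pi.single_apply, Pi.add_apply, Pi.neg_apply, Pi.zero_apply,
      Pi.smul_apply, smul_eq_mul, Matrix.cons_val_zero, Matrix.cons_val_one, Matrix.head_cons,
      Matrix.cons_val_two, Matrix.tail_cons, Fin.zero_eta, Fin.mk_one, Fin.reduceFinMk,
      Fin.reduceEq, reduceIte, Fin.isValue]; ring)

variable (hnF : ∀ x y : V, nabla x y =
    ![ x 0*(-ω₂*(y 1) + ω₁*(y 2)),
       x 0*(y 0)*ω₂ + (θ₁/2)*(x 1*(y 2)) - (θ₂/2)*(x 2*(y 2)),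
       x 0*(y 0)*ω₁ + (θ₁/2)*(x 1*(y 1)) - (θ₂/2)*(x 2*(y 1)) ])

include hbF hnF in
lemma RcF : ∀ x y z : V, Rc br nabla x y z =
    ![ (x 0*y 1 - x 1*y 0)*(z 1*(θ₁*ω₁/2 - ω₂^2) - z 2*(θ₁*ω₂/2 - ω₁*ω₂))
       + (x 0*y 2 - x 2*y 0)*(-(z 1)*(θ₂*ω₁/2 - ω₁*ω₂) + z 2*(θ₂*ω₂/2 - ω₁^2)),
       -((x 0*y 1 - x 1*y 0)*(z 0)*(θ₁*ω₁/2 - ω₂^2))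
       + (x 0*y 2 - x 2*y 0)*(z 0)*(θ₂*ω₁/2 - ω₁*ω₂)
       - (x 1*y 2 - x 2*y 1)*(z 2)*((θ₁^2 - θ₂^2)/4),
       -((x 0*y 1 - x 1*y 0)*(z 0)*(θ₁*ω₂/2 - ω₁*ω₂))
       + (x 0*y 2 - x 2*y 0)*(z 0)*(θ₂*ω₂/2 - ω₁^2)
       - (x 1*y 2 - x 2*y 1)*(z 1)*((θ₁^2 - θ₂^2)/4) ] := by
  intro x y z
  simp only [Rc, hnF, hbF]
  funext k; fin_cases k <;>
    simp [Matrix.cons_val_zero, Matrix.cons_val_one, Matrix.head_cons] <;> ring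
end Aux

/-- Ricci-flat if and only if flat. -/
theorem statement14
    (θ₁ θ₂ ω₁ ω₂ : ℝ) (hcomm : θ₁ * ω₂ = θ₂ * ω₁)
    (br : V →ₗ[ℝ] V →ₗ[ℝ] V)
    (hskew : ∀ x y : V, br x y = - br y x)
    (h01 : br (e 0) (e 1) = (-ω₂) • e 0)
    (h02 : br (e 0) (e 2) = ω₁ • e 0)
    (h12 : br (e 1) (e 2) = ((1/2) * θ₁) • e 1 + ((1/2) * θ₂) • e 2)
    (nabla : V →ₗ[ℝ] V →ₗ[ℝ] V)
    (hKoszul : ∀ x y z : V, 2 * gB (nabla x y) z =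
      gB (br x y) z + gB (br z x) y + gB (br z y) x) :
    (∀ y z : V, ric br nabla y z = 0) ↔ (∀ x y z : V, Rc br nabla x y z = 0) := by
  have hbF := brF θ₁ θ₂ ω₁ ω₂ br hskew h01 h02 h12
  have hnF := nabF θ₁ θ₂ ω₁ ω₂ br nabla hKoszul hbF
  have hRc := RcF θ₁ θ₂ ω₁ ω₂ br nabla hbF hnF
  constructor
  · intro hric x y z
    have E2 := hric (e 1) (e 1)
    have E3 := hric (e 1) (e 2)
    have E4 := hric (e 2) (e 1)
    have E5 := hric (e 2) (e 2)
    simp [ric, R4, hRc, gB, e, Pi.single_apply] at E2 E3 E4 E5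
    have hA2 : θ₁*ω₂/2 - ω₁*ω₂ = 0 := by nlinarith [E3]
    have hA3 : θ₂*ω₁/2 - ω₁*ω₂ = 0 := by nlinarith [E4]
    have hA5 : θ₁^2 - θ₂^2 = 0 := by
      rcases eq_or_ne ω₂ 0 with h | h
      · rcases eq_or_ne ω₁ 0 with h1 | h1
        · rw [h, h1] at E2 E5; nlinarith [E2, E5]
        · have ht2 : θ₂ = 0 := by
            have h0 : θ₂ * ω₁ = 0 := by rw [h] at hA3; linarith [hA3]
            rcases mul_eq_zero.1 h0 with h2 | h2
            · exact h2
            · exact absurd h2 h1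
          rw [h, ht2] at E2 E5
          nlinarith [E2, E5, sq_nonneg ω₁, sq_nonneg (θ₁ - 2*ω₁), sq_nonneg (θ₁ + 2*ω₁)]
      · have hw1 : ω₁ = θ₁/2 := by
          have h0 : ω₂ * (ω₁ - θ₁/2) = 0 := by ring_nf; nlinarith [hA2]
          rcases mul_eq_zero.1 h0 with h2 | h2
          · exact absurd h2 h
          · linarith
        rcases eq_or_ne θ₁ 0 with h1 | h1
        · rw [h1] at hw1; rw [h1, hw1] at E2
          nlinarith [E2, sq_nonneg ω₂, sq_nonneg θ₂, sq_pos_of_ne_zero h]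
        · have ht2 : θ₂ = 2*ω₂ := by
            have h0 : θ₁ * (θ₂ - 2*ω₂) = 0 := by rw [hw1] at hA3; ring_nf; nlinarith [hA3]
            rcases mul_eq_zero.1 h0 with h2 | h2
            · exact absurd h2 h1
            · linarith
          rw [hw1, ht2] at E2; rw [ht2]; linear_combination 2*E2
    have hA1 : θ₁*ω₁/2 - ω₂^2 = 0 := by nlinarith [E2, hA5]
    have hA4 : θ₂*ω₂/2 - ω₁^2 = 0 := by nlinarith [E5, hA5]
    rw [hRc x y z, hA1, hA2, hA3, hA4, hA5]
    funext k; fin_cases k <;> simp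
  · intro hR y z
    simp [ric, R4, hR, gB]
end
end

section
/- The scalar curvature τ vanishes if and only if there exists ε ∈ {−1, 1} such that θ₁ = εθ₂ and ω₁ = εω₂ (equivalently, θ₁ ∓ θ₂ = ω₁ ∓ ω₂ = 0 for a common choice of sign). -/
noncomputable section

/-!
The Koszul formula determines `∇` explicitly, and a direct computation gives
`τ = Q(θ₁, ω₁) - Q(θ₂, ω₂)` for the positive definite form
`Q(θ, ω) = θ²/2 + θω + 2ω² = ((θ + ω)² + 3ω²)/2`.
For `u = (θ₁, ω₁)` and `v = (θ₂, ω₂)` the identity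
`Q(u - v) Q(u + v) = (Q(u) - Q(v))² + 3 (θ₁ω₂ - θ₂ω₁)²` shows that, when `u` and `v` are
parallel, `Q(u) = Q(v)` forces `Q(u - v) = 0` or `Q(u + v) = 0`, i.e. `u = ±v`.
-/

def quadForm (θ ω : ℝ) : ℝ := θ ^ 2 / 2 + θ * ω + 2 * ω ^ 2

lemma quadForm_eq_sum_sq (θ ω : ℝ) : quadForm θ ω = ((θ + ω) ^ 2 + 3 * ω ^ 2) / 2 := by
  unfold quadForm
  ring

lemma quadForm_eq_zero_iff {θ ω : ℝ} : quadForm θ ω = 0 ↔ θ = 0 ∧ ω = 0 := by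
  refine ⟨fun h => ?_, fun ⟨hθ, hω⟩ => by simp [quadForm, hθ, hω]⟩
  rw [quadForm_eq_sum_sq] at h
  have hω : ω = 0 := by nlinarith [sq_nonneg (θ + ω)]
  subst hω
  simpa using h

lemma quadForm_sub_mul_quadForm_add (θ₁ θ₂ ω₁ ω₂ : ℝ) :
    quadForm (θ₁ - θ₂) (ω₁ - ω₂) * quadForm (θ₁ + θ₂) (ω₁ + ω₂) =
      (quadForm θ₁ ω₁ - quadForm θ₂ ω₂) ^ 2 + 3 * (θ₁ * ω₂ - θ₂ * ω₁) ^ 2 := by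
  unfold quadForm
  ring

lemma quadForm_eq_quadForm_iff {θ₁ θ₂ ω₁ ω₂ : ℝ} (hcomm : θ₁ * ω₂ = θ₂ * ω₁) :
    quadForm θ₁ ω₁ = quadForm θ₂ ω₂ ↔
      ∃ ε : ℝ, (ε = 1 ∨ ε = -1) ∧ θ₁ = ε * θ₂ ∧ ω₁ = ε * ω₂ := by
  constructor
  · intro h
    have hprod := quadForm_sub_mul_quadForm_add θ₁ θ₂ ω₁ ω₂
    rw [h, hcomm, sub_self, sub_self, zero_pow two_ne_zero, mul_zero, add_zero] at hprod
    rcases mul_eq_zero.mp hprod with hminus | hplus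
    · obtain ⟨hθ, hω⟩ := quadForm_eq_zero_iff.mp hminus
      exact ⟨1, .inl rfl, by linarith, by linarith⟩
    · obtain ⟨hθ, hω⟩ := quadForm_eq_zero_iff.mp hplus
      exact ⟨-1, .inr rfl, by linarith, by linarith⟩
  · rintro ⟨ε, rfl | rfl, rfl, rfl⟩ <;> simp [quadForm]

lemma eq_sum_smul_e (v : V) : v = v 0 • e 0 + v 1 • e 1 + v 2 • e 2 := by
  ext k
  fin_cases k <;> simp [e]

lemma eq_of_forall_gB_eq {u v : V} (h : ∀ z, gB u z = gB v z) : u = v := by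
  ext k
  have := h (e k)
  fin_cases k <;> simpa [gB, e] using this

section StructureConstants

variable (θ₁ θ₂ ω₁ ω₂ : ℝ)

def structBracket (x y : V) : V :=
  ![-ω₂ * (x 0 * y 1 - x 1 * y 0) + ω₁ * (x 0 * y 2 - x 2 * y 0),
    θ₁ / 2 * (x 1 * y 2 - x 2 * y 1),
    θ₂ / 2 * (x 1 * y 2 - x 2 * y 1)]

def leviCivita (x y : V) : V :=
  ![-ω₂ * (x 0 * y 1) + ω₁ * (x 0 * y 2),
    ω₂ * (x 0 * y 0) + θ₁ / 2 * (x 1 * y 2) - θ₂ / 2 * (x 2 * y 2),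
    ω₁ * (x 0 * y 0) + θ₁ / 2 * (x 1 * y 1) - θ₂ / 2 * (x 2 * y 1)]

variable {θ₁ θ₂ ω₁ ω₂}

lemma eq_structBracket (br : V →ₗ[ℝ] V →ₗ[ℝ] V) (hskew : ∀ x y : V, br x y = - br y x)
    (h01 : br (e 0) (e 1) = (-ω₂) • e 0) (h02 : br (e 0) (e 2) = ω₁ • e 0)
    (h12 : br (e 1) (e 2) = ((1/2) * θ₁) • e 1 + ((1/2) * θ₂) • e 2) (x y : V) :
    br x y = structBracket θ₁ θ₂ ω₁ ω₂ x y := by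
  have hdiag (i : Fin 3) : br (e i) (e i) = 0 := self_eq_neg.mp (hskew _ _)
  conv_lhs => rw [eq_sum_smul_e x, eq_sum_smul_e y]
  simp only [map_add, map_smul, LinearMap.add_apply, LinearMap.smul_apply, hdiag,
    hskew (e 1) (e 0), hskew (e 2) (e 0), hskew (e 2) (e 1), h01, h02, h12]
  ext k
  fin_cases k <;>
    simp only [Fin.isValue, smul_zero, e, neg_smul, neg_neg, zero_add, smul_neg, smul_add,
      add_zero, one_div, neg_add_rev, Fin.zero_eta, Fin.mk_one, Fin.reduceFinMk, Pi.add_apply,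
      Pi.smul_apply, Pi.single_eq_same, Pi.single_eq_of_ne, smul_eq_mul, mul_one, Pi.neg_apply,
      ne_eq, Fin.reduceEq, one_ne_zero, zero_ne_one, not_false_eq_true, mul_zero, neg_zero,
      structBracket, neg_mul, Matrix.cons_val_zero, Matrix.cons_val_one, Matrix.cons_val] <;>
    ring

lemma two_mul_gB_leviCivita (x y z : V) :
    2 * gB (leviCivita θ₁ θ₂ ω₁ ω₂ x y) z =
      gB (structBracket θ₁ θ₂ ω₁ ω₂ x y) z + gB (structBracket θ₁ θ₂ ω₁ ω₂ z x) y
        + gB (structBracket θ₁ θ₂ ω₁ ω₂ z y) x := by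
  simp only [gB, leviCivita, structBracket, Fin.isValue, neg_mul, Matrix.cons_val_zero,
    Matrix.cons_val_one, Matrix.cons_val]
  ring

lemma eq_leviCivita (br nabla : V →ₗ[ℝ] V →ₗ[ℝ] V)
    (hbr : ∀ x y, br x y = structBracket θ₁ θ₂ ω₁ ω₂ x y)
    (hKoszul : ∀ x y z : V, 2 * gB (nabla x y) z =
      gB (br x y) z + gB (br z x) y + gB (br z y) x) (x y : V) :
    nabla x y = leviCivita θ₁ θ₂ ω₁ ω₂ x y :=
  eq_of_forall_gB_eq fun z => by
    have h := hKoszul x y z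
    rw [hbr, hbr, hbr, ← two_mul_gB_leviCivita] at h
    linarith

lemma scal_eq_quadForm_sub (br nabla : V →ₗ[ℝ] V →ₗ[ℝ] V)
    (hbr : ∀ x y, br x y = structBracket θ₁ θ₂ ω₁ ω₂ x y)
    (hnabla : ∀ x y, nabla x y = leviCivita θ₁ θ₂ ω₁ ω₂ x y) :
    scal br nabla = quadForm θ₁ ω₁ - quadForm θ₂ ω₂ := by
  simp only [scal, ric, R4, Rc, hbr, hnabla]
  simp only [gB, leviCivita, e, Fin.isValue, Pi.single_eq_same, ne_eq, one_ne_zero,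
    not_false_eq_true, Pi.single_eq_of_ne, mul_zero, Fin.reduceEq, add_zero, mul_one, sub_zero,
    Matrix.cons_val_one, Matrix.cons_val_zero, one_mul, neg_mul, Matrix.cons_val, zero_mul,
    sub_self, structBracket, Pi.sub_apply, Pi.zero_apply, zero_ne_one, zero_add, Matrix.sub_cons,
    Matrix.head_cons, Matrix.tail_cons, Matrix.zero_empty, zero_sub, mul_neg, neg_neg,
    sub_neg_eq_add, neg_add_rev, neg_zero, neg_sub, quadForm]
  ring

end StructureConstants

/-- scalar flatness criterion. -/
theorem statement15
    (θ₁ θ₂ ω₁ ω₂ : ℝ) (hcomm : θ₁ * ω₂ = θ₂ * ω₁)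
    (br : V →ₗ[ℝ] V →ₗ[ℝ] V)
    (hskew : ∀ x y : V, br x y = - br y x)
    (h01 : br (e 0) (e 1) = (-ω₂) • e 0)
    (h02 : br (e 0) (e 2) = ω₁ • e 0)
    (h12 : br (e 1) (e 2) = ((1/2) * θ₁) • e 1 + ((1/2) * θ₂) • e 2)
    (nabla : V →ₗ[ℝ] V →ₗ[ℝ] V)
    (hKoszul : ∀ x y z : V, 2 * gB (nabla x y) z =
      gB (br x y) z + gB (br z x) y + gB (br z y) x) :
    scal br nabla = 0 ↔
      ∃ ε : ℝ, (ε = 1 ∨ ε = -1) ∧ θ₁ = ε * θ₂ ∧ ω₁ = ε * ω₂ := by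
  have hbr := eq_structBracket br hskew h01 h02 h12
  have hnabla := eq_leviCivita br nabla hbr hKoszul
  rw [scal_eq_quadForm_sub br nabla hbr hnabla, sub_eq_zero]
  exact quadForm_eq_quadForm_iff hcomm
end
end
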